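/- arXiv:1507.07980 — 2 statements merged into one kernel-verified Lean document; each statement's English description precedes it below -/
import Mathlib

section
/- The imaginary part of Li₂(z) equals zero if and only if z lies in the real interval (−∞, 1]. -/
open Complex

/-- The principal branch of the dilogarithm, `Li₂(z) = -∫₀^z log(1-u)/u du`
integrated along the straight line from `0` to `z`. -/
noncomputable def dilog (z : ℂ) : ℂ :=
  -∫ t in (0:ℝ)..1, Complex.log (1 - (t : ℂ) * z) / (t : ℂ)

/-!
Along the segment the integrand has imaginary part `arg (1 - t z) / t`, and `Im Li₂(z)` is minus
its integral, because `log (1 - t z) / t` is integrable: it is bounded near `t = 0`, and elsewhere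
it is dominated by `|log ‖1 - t z‖| + π`, the log-norm of a meromorphic function being integrable.
If `Im z ≠ 0`, then `arg (1 - t z)` has the constant sign of `-Im z` on `(0, 1]`, so
`Im Li₂(z) ≠ 0`. For real `x`, `arg (1 - t x)` is `0` where `t x ≤ 1` and `π` where `t x > 1`,
which gives `Im Li₂(x) = 0` for `x ≤ 1` and `Im Li₂(x) = -π log x` for `x > 1`.
-/

open MeasureTheory Set intervalIntegral
open scoped Real Interval

noncomputable def dilogIntegrand (z : ℂ) (t : ℝ) : ℂ := log (1 - t * z) / t

theorem dilog_eq_neg_integral (z : ℂ) : dilog z = -∫ t in (0:ℝ)..1, dilogIntegrand z t := rfl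

theorem norm_log_le_abs_log_norm_add_pi (w : ℂ) : ‖log w‖ ≤ |Real.log ‖w‖| + π := by
  refine (norm_le_abs_re_add_abs_im _).trans ?_
  rw [log_re, log_im]
  gcongr
  exact abs_arg_le_pi w

theorem intervalIntegrable_log_one_sub_mul (z : ℂ) (a b : ℝ) :
    IntervalIntegrable (fun t : ℝ => log (1 - t * z)) volume a b := by
  have hmer : MeromorphicOn (fun t : ℝ => 1 - (t : ℂ) * z) [[a, b]] :=
    AnalyticOnNhd.meromorphicOn fun t _ =>
      analyticAt_const.sub ((ofRealCLM.analyticAt t).mul analyticAt_const)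
  exact (hmer.intervalIntegrable_log_norm.abs.add intervalIntegrable_const).mono_fun'
    (measurable_log.comp (by fun_prop)).aestronglyMeasurable
    (ae_of_all _ fun t => norm_log_le_abs_log_norm_add_pi _)

theorem measurable_dilogIntegrand (z : ℂ) : Measurable (dilogIntegrand z) :=
  (measurable_log.comp (by fun_prop)).div (by fun_prop)

theorem norm_dilogIntegrand_le {z : ℂ} {t : ℝ} (ht : 0 < t) (htz : t * ‖z‖ ≤ 1 / 2) :
    ‖dilogIntegrand z t‖ ≤ 3 / 2 * ‖z‖ := by
  have hnorm : ‖-(t * z)‖ = t * ‖z‖ := by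
    rw [norm_neg, norm_mul, norm_real, Real.norm_of_nonneg ht.le]
  have hlog := norm_log_one_add_half_le_self (hnorm ▸ htz)
  rw [← sub_eq_add_neg, hnorm] at hlog
  rw [dilogIntegrand, norm_div, norm_real, Real.norm_of_nonneg ht.le, div_le_iff₀ ht]
  linarith

theorem intervalIntegrable_dilogIntegrand (z : ℂ) :
    IntervalIntegrable (dilogIntegrand z) volume 0 1 := by
  set δ : ℝ := (2 * (‖z‖ + 1))⁻¹
  have hδ : 0 < δ := by positivity
  have hδz : δ * ‖z‖ ≤ 1 / 2 := by
    rw [inv_mul_le_iff₀ (by positivity)]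
    linarith
  have hδ1 : δ ≤ 1 := inv_le_one_of_one_le₀ (by linarith [norm_nonneg z])
  have hnear : IntervalIntegrable (dilogIntegrand z) volume 0 δ := by
    refine (intervalIntegrable_const (c := 3 / 2 * ‖z‖)).mono_fun'
      (measurable_dilogIntegrand z).aestronglyMeasurable ?_
    rw [uIoc_of_le hδ.le]
    exact (ae_restrict_iff' measurableSet_Ioc).mpr <| ae_of_all _ fun t ht =>
      norm_dilogIntegrand_le ht.1 (le_trans (by gcongr; exact ht.2) hδz)
  have hfar : IntervalIntegrable (dilogIntegrand z) volume δ 1 := by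
    refine (intervalIntegrable_log_one_sub_mul z δ 1).mul_continuousOn
      (g := fun t : ℝ => ((t : ℂ))⁻¹) ?_
    refine ContinuousOn.inv₀ (by fun_prop) fun t ht => ?_
    rw [uIcc_of_le hδ1] at ht
    exact ofReal_ne_zero.mpr (hδ.trans_le ht.1).ne'
  exact hnear.trans hfar

theorem im_dilog (z : ℂ) : (dilog z).im = -∫ t in (0:ℝ)..1, arg (1 - t * z) / t := by
  rw [dilog_eq_neg_integral, neg_im, ← RCLike.im_to_complex,
    ← intervalIntegral_im (intervalIntegrable_dilogIntegrand z)]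
  simp [dilogIntegrand, div_ofReal_im, log_im]

theorem intervalIntegrable_arg_one_sub_mul_div (z : ℂ) :
    IntervalIntegrable (fun t : ℝ => arg (1 - t * z) / t) volume 0 1 := by
  have h := intervalIntegrable_dilogIntegrand z
  have him : IntervalIntegrable (fun t => (dilogIntegrand z t).im) volume 0 1 := ⟨h.1.im, h.2.im⟩
  simpa [dilogIntegrand, div_ofReal_im, log_im] using him

theorem im_one_sub_ofReal_mul (t : ℝ) (z : ℂ) : (1 - t * z).im = -(t * z.im) := by simp

theorem im_dilog_pos {z : ℂ} (hz : 0 < z.im) : 0 < (dilog z).im := by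
  rw [im_dilog, neg_pos, ← neg_pos, ← intervalIntegral.integral_neg]
  refine intervalIntegral_pos_of_pos_on (intervalIntegrable_arg_one_sub_mul_div z).neg
    (fun t ht => ?_) zero_lt_one
  have harg : arg (1 - t * z) < 0 := by
    rw [arg_neg_iff, im_one_sub_ofReal_mul]
    nlinarith [ht.1]
  exact neg_pos.mpr (div_neg_of_neg_of_pos harg ht.1)

theorem im_dilog_neg {z : ℂ} (hz : z.im < 0) : (dilog z).im < 0 := by
  rw [im_dilog, neg_lt_zero]
  refine intervalIntegral_pos_of_pos_on (intervalIntegrable_arg_one_sub_mul_div z)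
    (fun t ht => ?_) zero_lt_one
  have him : 0 < (1 - t * z).im := by
    rw [im_one_sub_ofReal_mul]
    nlinarith [ht.1]
  have harg : 0 < arg (1 - t * z) :=
    (arg_nonneg_iff.mpr him.le).lt_of_ne fun h => him.ne' (arg_eq_zero_iff.mp h.symm).2
  exact div_pos harg ht.1

theorem one_sub_ofReal_mul_ofReal (t x : ℝ) : 1 - (t : ℂ) * x = ((1 - t * x : ℝ) : ℂ) := by
  push_cast; rfl

theorem arg_one_sub_ofReal_mul_ofReal_of_le {t x : ℝ} (h : t * x ≤ 1) :
    arg (1 - (t : ℂ) * x) = 0 := by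
  rw [one_sub_ofReal_mul_ofReal, arg_ofReal_of_nonneg (sub_nonneg.mpr h)]

theorem arg_one_sub_ofReal_mul_ofReal_of_one_lt {t x : ℝ} (h : 1 < t * x) :
    arg (1 - (t : ℂ) * x) = π := by
  rw [one_sub_ofReal_mul_ofReal, arg_ofReal_of_neg (sub_neg.mpr h)]

theorem im_dilog_ofReal_of_le_one {x : ℝ} (hx : x ≤ 1) : (dilog x).im = 0 := by
  rw [im_dilog, neg_eq_zero]
  refine (intervalIntegral.integral_congr (g := 0) fun t ht => ?_).trans integral_zero
  rw [uIcc_of_le zero_le_one] at ht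
  have htx : t * x ≤ 1 := by nlinarith [ht.1, ht.2]
  rw [arg_one_sub_ofReal_mul_ofReal_of_le htx, zero_div, Pi.zero_apply]

theorem im_dilog_ofReal_of_one_lt {x : ℝ} (hx : 1 < x) : (dilog x).im = -(π * Real.log x) := by
  have hx0 : 0 < x := zero_lt_one.trans hx
  set c : ℝ := x⁻¹
  have hc0 : 0 < c := inv_pos.mpr hx0
  have hc1 : c < 1 := inv_lt_one_of_one_lt₀ hx
  have hc : c ∈ [[(0:ℝ), 1]] := by rw [uIcc_of_le zero_le_one]; exact ⟨hc0.le, hc1.le⟩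
  have hint := intervalIntegrable_arg_one_sub_mul_div (x : ℂ)
  have hbelow : ∫ t in (0:ℝ)..c, arg (1 - t * (x : ℂ)) / t = 0 := by
    refine (intervalIntegral.integral_congr (g := 0) fun t ht => ?_).trans integral_zero
    rw [uIcc_of_le hc0.le] at ht
    have htx : t * x ≤ 1 := by rw [← not_lt, ← inv_lt_iff_one_lt_mul₀ hx0, not_lt]; exact ht.2
    rw [arg_one_sub_ofReal_mul_ofReal_of_le htx, zero_div, Pi.zero_apply]
  have habove : ∫ t in c..1, arg (1 - t * (x : ℂ)) / t = π * Real.log x := by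
    have hpi : ∫ t in c..1, arg (1 - t * (x : ℂ)) / t = ∫ t in c..1, π * (1 / t) := by
      rw [integral_of_le hc1.le, integral_of_le hc1.le]
      refine setIntegral_congr_fun measurableSet_Ioc fun t ht => ?_
      rw [arg_one_sub_ofReal_mul_ofReal_of_one_lt ((inv_lt_iff_one_lt_mul₀ hx0).mp ht.1),
        mul_one_div]
    rw [hpi, intervalIntegral.integral_const_mul, integral_one_div_of_pos hc0 zero_lt_one,
      div_inv_eq_mul, one_mul]
  rw [im_dilog, ← integral_add_adjacent_intervals (b := c)
    (hint.mono_set (uIcc_subset_uIcc left_mem_uIcc hc))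
    (hint.mono_set (uIcc_subset_uIcc hc right_mem_uIcc)), hbelow, habove, zero_add]

theorem im_dilog_eq_zero_iff (z : ℂ) :
    (dilog z).im = 0 ↔ ∃ x : ℝ, x ≤ 1 ∧ z = (x : ℂ) := by
  refine ⟨fun h => ?_, fun ⟨x, hx, hz⟩ => hz ▸ im_dilog_ofReal_of_le_one hx⟩
  obtain hneg | hzero | hpos := lt_trichotomy z.im 0
  · exact absurd h (im_dilog_neg hneg).ne
  · have hz : z = (z.re : ℂ) := ext rfl (by simpa using hzero)
    refine ⟨z.re, not_lt.mp fun hre => ?_, hz⟩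
    rw [hz, im_dilog_ofReal_of_one_lt hre, neg_eq_zero] at h
    exact (mul_pos Real.pi_pos (Real.log_pos hre)).ne' h
  · exact absurd h (im_dilog_pos hpos).ne'
end

section
/- For real x > 0, Li₂(−x) = −π²/6 − (1/2)·(log x)² − Li₂(−1/x). -/
open Complex

/-!
Put `F x = ∫₀ˣ log (1 + u) / u du`. The substitution `u = t x` in the defining integral gives
`Li₂(-x) = -F x` for `x > 0`. The function `F x + F x⁻¹ - (log x)² / 2` has derivative zero on
`(0, ∞)`, so it equals its value `2 F 1` at `1`. Integrating `log (1 + u) / u = ∑ (-u)ⁿ / (n + 1)`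
termwise gives `F 1 = ∑ (-1)ⁿ / (n + 1)² = π² / 12`.
-/

open MeasureTheory Set intervalIntegral

lemma hasSum_one_div_succ_sq :
    HasSum (fun n : ℕ => 1 / ((n : ℝ) + 1) ^ 2) (Real.pi ^ 2 / 6) := by
  simpa using (hasSum_nat_add_iff' 1).2 hasSum_zeta_two

-- The difference from `ζ(2)` only sees the odd `n = 2m + 1`, which contribute `ζ(2) / 2`.
lemma hasSum_neg_one_pow_div_succ_sq :
    HasSum (fun n : ℕ => (-1) ^ n / ((n : ℝ) + 1) ^ 2) (Real.pi ^ 2 / 12) := by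
  have hdiff : HasSum (fun n : ℕ => 1 / ((n : ℝ) + 1) ^ 2 - (-1) ^ n / ((n : ℝ) + 1) ^ 2)
      (0 + 1 / 2 * (Real.pi ^ 2 / 6)) := by
    refine HasSum.even_add_odd ?_ ?_
    · convert hasSum_zero with m
      simp [pow_mul]
    · convert! hasSum_one_div_succ_sq.mul_left (1 / 2) using 1
      ext m
      push_cast
      rw [pow_succ (-1 : ℝ), pow_mul, neg_one_sq, one_pow]
      field_simp
      ring
  convert! hasSum_one_div_succ_sq.sub hdiff using 1
  · ext n; ring
  · ring

lemma hasSum_log_one_add_div {u : ℝ} (h0 : u ≠ 0) (h1 : |u| < 1) :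
    HasSum (fun n : ℕ => (-u) ^ n / (n + 1)) (Real.log (1 + u) / u) := by
  have h := (Real.hasSum_pow_div_log_of_abs_lt_one (x := -u) (by rwa [abs_neg])).div_const (-u)
  convert! h using 1
  · ext n
    rw [pow_succ]
    field_simp
  · rw [sub_neg_eq_add, neg_div_neg_eq]

lemma setIntegral_Ioo_pow_div_succ (n : ℕ) :
    ∫ u in Ioo (0:ℝ) 1, u ^ n / (n + 1) = 1 / ((n : ℝ) + 1) ^ 2 := by
  rw [← integral_Ioc_eq_integral_Ioo, ← integral_of_le zero_le_one, intervalIntegral.integral_div,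
    integral_pow]
  field_simp
  simp

noncomputable def logOneAddDivIntegral (x : ℝ) : ℝ := ∫ u in (0:ℝ)..x, Real.log (1 + u) / u

lemma measurable_log_one_add_div : Measurable fun u : ℝ => Real.log (1 + u) / u := by
  fun_prop

lemma log_one_add_div_mem_Icc {u : ℝ} (hu : 0 ≤ u) : Real.log (1 + u) / u ∈ Icc 0 1 := by
  refine ⟨div_nonneg (Real.log_nonneg (by linarith)) hu, ?_⟩
  rcases hu.eq_or_lt with rfl | hu
  · simp
  · rw [div_le_one hu]
    linarith [Real.log_le_sub_one_of_pos (show 0 < 1 + u by linarith)]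

lemma intervalIntegrable_log_one_add_div {y : ℝ} (hy : 0 ≤ y) :
    IntervalIntegrable (fun u => Real.log (1 + u) / u) volume 0 y := by
  refine (intervalIntegrable_const (c := (1 : ℝ))).mono_fun'
    measurable_log_one_add_div.aestronglyMeasurable ?_
  rw [uIoc_of_le hy]
  filter_upwards [ae_restrict_mem measurableSet_Ioc] with u hu
  have hmem := log_one_add_div_mem_Icc hu.1.le
  rw [Real.norm_of_nonneg hmem.1]
  exact hmem.2

lemma hasDerivAt_logOneAddDivIntegral {x : ℝ} (hx : 0 < x) :
    HasDerivAt logOneAddDivIntegral (Real.log (1 + x) / x) x := by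
  refine integral_hasDerivAt_right (intervalIntegrable_log_one_add_div hx.le)
    measurable_log_one_add_div.aestronglyMeasurable.stronglyMeasurableAtFilter ?_
  exact (ContinuousAt.log (f := fun u => 1 + u) (by fun_prop) (by linarith)).div
    continuousAt_id hx.ne'

lemma hasDerivAt_logOneAddDivIntegral_inv {x : ℝ} (hx : 0 < x) :
    HasDerivAt (fun y => logOneAddDivIntegral y⁻¹) ((Real.log x - Real.log (1 + x)) / x) x := by
  convert! (hasDerivAt_logOneAddDivIntegral (inv_pos.2 hx)).comp x (hasDerivAt_inv hx.ne')
    using 1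
  rw [show 1 + x⁻¹ = (1 + x) / x by field_simp; ring, Real.log_div (by linarith) hx.ne']
  field_simp
  ring

lemma logOneAddDivIntegral_add_inv {x : ℝ} (hx : 0 < x) :
    logOneAddDivIntegral x + logOneAddDivIntegral x⁻¹ =
      2 * logOneAddDivIntegral 1 + Real.log x ^ 2 / 2 := by
  set G : ℝ → ℝ := fun y =>
    logOneAddDivIntegral y + logOneAddDivIntegral y⁻¹ - Real.log y ^ 2 / 2
  have hG : ∀ y ∈ Ioi (0 : ℝ), HasDerivAt G 0 y := fun y (hy : 0 < y) => by
    refine (((hasDerivAt_logOneAddDivIntegral hy).add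
      (hasDerivAt_logOneAddDivIntegral_inv hy)).sub
      (((Real.hasDerivAt_log hy.ne').pow 2).div_const 2)).congr_deriv ?_
    field_simp
    ring
  have hconst : G x = G 1 := isOpen_Ioi.is_const_of_deriv_eq_zero isPreconnected_Ioi
    (fun y hy => (hG y hy).differentiableAt.differentiableWithinAt)
    (fun y hy => (hG y hy).deriv) hx (mem_Ioi.2 one_pos)
  simp only [G, inv_one, Real.log_one] at hconst
  linarith

lemma logOneAddDivIntegral_one : logOneAddDivIntegral 1 = Real.pi ^ 2 / 12 := by
  have hint : ∀ n : ℕ, Integrable (fun u : ℝ => (-u) ^ n / (n + 1)) (volume.restrict (Ioo 0 1)) :=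
    fun n => (Continuous.integrableOn_Icc (by fun_prop)).mono_set Ioo_subset_Icc_self
  have hnorm : ∀ n : ℕ, ∫ u in Ioo (0:ℝ) 1, ‖(-u) ^ n / (n + 1)‖ = 1 / ((n : ℝ) + 1) ^ 2 :=
    fun n => by
      rw [← setIntegral_Ioo_pow_div_succ n]
      refine setIntegral_congr_fun measurableSet_Ioo fun u hu => ?_
      rw [norm_div, norm_pow, norm_neg, Real.norm_of_nonneg hu.1.le,
        Real.norm_of_nonneg (by positivity)]
  have hterm : ∀ n : ℕ, ∫ u in Ioo (0:ℝ) 1, (-u) ^ n / (n + 1) = (-1) ^ n / ((n : ℝ) + 1) ^ 2 :=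
    fun n => by
      have hsplit : ∀ u : ℝ, (-u) ^ n / (n + 1) = (-1) ^ n * (u ^ n / (n + 1)) := fun u => by
        rw [neg_pow, mul_div_assoc]
      simp only [hsplit, MeasureTheory.integral_const_mul, setIntegral_Ioo_pow_div_succ]
      ring
  have hsum := hasSum_integral_of_summable_integral_norm hint
    (by simpa only [hnorm] using hasSum_one_div_succ_sq.summable)
  simp only [hterm] at hsum
  rw [hasSum_neg_one_pow_div_succ_sq.unique hsum, logOneAddDivIntegral,
    integral_of_le zero_le_one, integral_Ioc_eq_integral_Ioo]
  refine setIntegral_congr_fun measurableSet_Ioo fun u hu => ?_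
  exact ((hasSum_log_one_add_div hu.1.ne' (by rw [abs_of_pos hu.1]; exact hu.2)).tsum_eq).symm

lemma integral_log_one_add_mul_div {x : ℝ} (hx : 0 < x) :
    ∫ t in (0:ℝ)..1, Real.log (1 + t * x) / t = logOneAddDivIntegral x := by
  have hscale : ∀ t : ℝ, Real.log (1 + t * x) / t = x * (Real.log (1 + x * t) / (x * t)) := by
    intro t
    rcases eq_or_ne t 0 with rfl | ht
    · simp
    · rw [mul_comm x t]
      field_simp
  simp_rw [hscale, intervalIntegral.integral_const_mul,
    integral_comp_mul_left (fun u => Real.log (1 + u) / u) hx.ne', mul_zero, mul_one, smul_eq_mul,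
    ← mul_assoc, mul_inv_cancel₀ hx.ne', one_mul]
  rfl

lemma dilog_neg_ofReal {x : ℝ} (hx : 0 < x) :
    dilog (-(x : ℂ)) = -(logOneAddDivIntegral x : ℂ) := by
  rw [dilog, ← integral_log_one_add_mul_div hx, ← intervalIntegral.integral_ofReal]
  congr 1
  refine integral_congr fun t ht => ?_
  rw [uIcc_of_le zero_le_one] at ht
  have hpos : 0 < 1 + t * x := by nlinarith [mul_nonneg ht.1 hx.le]
  rw [show (1 : ℂ) - t * -x = ((1 + t * x : ℝ) : ℂ) by push_cast; ring,
    ← Complex.ofReal_log hpos.le, Complex.ofReal_div]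

theorem dilog_inversion (x : ℝ) (hx : 0 < x) :
    dilog (-(x : ℂ)) =
      -(Real.pi ^ 2 / 6 : ℝ) - (1 / 2 : ℂ) * (Real.log x : ℂ) ^ 2
        - dilog (-(1 / (x : ℂ))) := by
  have hsum := logOneAddDivIntegral_add_inv hx
  rw [logOneAddDivIntegral_one] at hsum
  rw [show -(1 / (x : ℂ)) = -((x⁻¹ : ℝ) : ℂ) by push_cast; ring, dilog_neg_ofReal hx,
    dilog_neg_ofReal (inv_pos.2 hx)]
  have hsumℂ := congrArg (fun r : ℝ => (r : ℂ)) hsum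
  push_cast at hsumℂ ⊢
  linear_combination -hsumℂ
end
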